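/- In the mean-field setting, assume λ > 0. Then the vector X^MF satisfies the linear system (α^MF·I − EA_τ + λ·P_L)·X^MF = λ·S, for every real τ. -/

import Mathlib

/-!
Since `σ⁰` is `±1`-valued, `EA_τ = ((p_in + p_out)/2 − τ) 𝟙𝟙ᵀ + ((p_in − p_out)/2) σ⁰σ⁰ᵀ`, so
`EA_τ X` only depends on `𝟙ᵀX` and `σ⁰ᵀX`. The score `X^MF_i` is a function of `(σ⁰_i, S_i)`
that is odd under swapping the two clusters, which have the same label counts; hence
`𝟙ᵀX^MF = 0`. Since `m γ₂ + k γ₁ = (k + m)(1 − 2s)`, also `σ⁰ᵀX^MF = n(1 − 2s)`. Thus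
`EA_τ X^MF = α^MF (1 − 2s) σ⁰`, and the system reduces to a scalar identity for each of the
three kinds of node.
-/

open Finset Matrix

noncomputable section

/-- The expected adjacency matrix `EA` of the SSBM: `(EA)_{ij} = p_in` if
`σ⁰_i = σ⁰_j`, and `p_out` otherwise. -/
def meanEA (n : ℕ) (pin pout : ℝ) (σ0 : Fin n → ℝ) : Matrix (Fin n) (Fin n) ℝ :=
  Matrix.of fun i j => if σ0 i = σ0 j then pin else pout

/-- The diagonal 0-1 matrix `P_L` with `(P_L)_{ii} = 1` iff `S_i ≠ 0`. -/
def labelProj (n : ℕ) (S : Fin n → ℝ) : Matrix (Fin n) (Fin n) ℝ :=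
  Matrix.diagonal fun i => if S i = 0 then 0 else 1

/-- The mean-field matrix `EL̃ = α^MF·I − EA_τ + λ·P_L`, with
`EA_τ = EA − τ·1ₙ1ₙᵀ` and `α^MF = n(p_in − p_out)/2`. -/
def meanLtilde (n : ℕ) (pin pout τ lam : ℝ) (σ0 S : Fin n → ℝ) :
    Matrix (Fin n) (Fin n) ℝ :=
  ((n : ℝ) * (pin - pout) / 2) • (1 : Matrix (Fin n) (Fin n) ℝ)
    - Matrix.of (fun i j => meanEA n pin pout σ0 i j - τ)
    + lam • labelProj n S

/-- The mean-field score vector `X^MF`: with `s = k/(k+m)`,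
`γ₁ = (−λ + (1−2s)α^MF)/(λ + α^MF)`, `γ₂ = (λ + (1−2s)α^MF)/(λ + α^MF)`,
`X^MF_i = γ₁σ⁰_i` on mislabeled nodes, `γ₂σ⁰_i` on correctly labeled nodes, and
`(1−2s)σ⁰_i` on unlabeled nodes. -/
def meanFieldX (n k m : ℕ) (pin pout lam : ℝ) (σ0 S : Fin n → ℝ) : Fin n → ℝ :=
  fun i =>
    if S i = 0 then (1 - 2 * ((k : ℝ) / ((k : ℝ) + (m : ℝ)))) * σ0 i
    else if S i = σ0 i then
      ((lam + (1 - 2 * ((k : ℝ) / ((k : ℝ) + (m : ℝ)))) * ((n : ℝ) * (pin - pout) / 2))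
          / (lam + (n : ℝ) * (pin - pout) / 2)) * σ0 i
    else
      ((-lam + (1 - 2 * ((k : ℝ) / ((k : ℝ) + (m : ℝ)))) * ((n : ℝ) * (pin - pout) / 2))
          / (lam + (n : ℝ) * (pin - pout) / 2)) * σ0 i

section Labelling

variable {ι : Type*} [Fintype ι] {σ S : ι → ℝ}

theorem sum_eq_sum_sign_label_classes (hσ : ∀ i, σ i = 1 ∨ σ i = -1)
    (hS : ∀ i, S i = σ i ∨ S i = -σ i ∨ S i = 0) (F : ℝ → ℝ → ℝ) :
    ∑ j, F (σ j) (S j) =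
      #{j | σ j = 1 ∧ S j = 1} * F 1 1 + #{j | σ j = 1 ∧ S j = -1} * F 1 (-1)
        + #{j | σ j = 1 ∧ S j = 0} * F 1 0
      + (#{j | σ j = -1 ∧ S j = -1} * F (-1) (-1) + #{j | σ j = -1 ∧ S j = 1} * F (-1) 1
        + #{j | σ j = -1 ∧ S j = 0} * F (-1) 0) := by
  have hclass : ∀ j, F (σ j) (S j) =
      (if σ j = 1 ∧ S j = 1 then 1 else 0) * F 1 1
        + (if σ j = 1 ∧ S j = -1 then 1 else 0) * F 1 (-1)
        + (if σ j = 1 ∧ S j = 0 then 1 else 0) * F 1 0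
      + ((if σ j = -1 ∧ S j = -1 then 1 else 0) * F (-1) (-1)
        + (if σ j = -1 ∧ S j = 1 then 1 else 0) * F (-1) 1
        + (if σ j = -1 ∧ S j = 0 then 1 else 0) * F (-1) 0) := by
    intro j
    rcases hσ j with h | h <;> rcases hS j with h' | h' | h' <;> simp only [h', h] <;> norm_num
  simp only [hclass, sum_add_distrib, ← sum_mul, sum_boole]

structure IsBalancedLabelling (σ S : ι → ℝ) (k m : ℕ) : Prop where
  sign : ∀ i, σ i = 1 ∨ σ i = -1
  label : ∀ i, S i = σ i ∨ S i = -σ i ∨ S i = 0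
  even_card : Even (Fintype.card ι)
  card_pos : #{i | σ i = 1} = Fintype.card ι / 2
  card_mislabelled_pos : #{i | σ i = 1 ∧ S i = -1} = k
  card_mislabelled_neg : #{i | σ i = -1 ∧ S i = 1} = k
  card_correct_pos : #{i | σ i = 1 ∧ S i = 1} = m
  card_correct_neg : #{i | σ i = -1 ∧ S i = -1} = m

namespace IsBalancedLabelling

variable {k m : ℕ}

theorem sum_eq (h : IsBalancedLabelling σ S k m) (F : ℝ → ℝ → ℝ) :
    ∑ j, F (σ j) (S j) =
      m * (F 1 1 + F (-1) (-1)) + k * (F 1 (-1) + F (-1) 1)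
        + (Fintype.card ι / 2 - m - k) * (F 1 0 + F (-1) 0) := by
  have hexpand := sum_eq_sum_sign_label_classes h.sign h.label
  have hcluster := hexpand fun a _ => if a = 1 then 1 else 0
  have htotal := hexpand fun _ _ => 1
  have hhalf : (Fintype.card ι : ℝ) = 2 * (Fintype.card ι / 2 : ℕ) := by
    exact_mod_cast (Nat.two_mul_div_two_of_even h.even_card).symm
  norm_num [h.card_pos, h.card_correct_pos, h.card_correct_neg, h.card_mislabelled_pos,
    h.card_mislabelled_neg] at hcluster htotal
  have hu_pos : (#{j | σ j = 1 ∧ S j = 0} : ℝ) = Fintype.card ι / 2 - m - k := by linarith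
  have hu_neg : (#{j | σ j = -1 ∧ S j = 0} : ℝ) = Fintype.card ι / 2 - m - k := by linarith
  rw [hexpand, h.card_correct_pos, h.card_correct_neg, h.card_mislabelled_pos,
    h.card_mislabelled_neg, hu_pos, hu_neg]
  ring

end IsBalancedLabelling

end Labelling

def meanFieldScore (α lam s a b : ℝ) : ℝ :=
  if b = 0 then (1 - 2 * s) * a
  else if b = a then (lam + (1 - 2 * s) * α) / (lam + α) * a
  else (-lam + (1 - 2 * s) * α) / (lam + α) * a

section MeanFieldScore

variable {α lam s : ℝ}

theorem meanFieldX_apply {n k m : ℕ} {pin pout lam : ℝ} {σ0 S : Fin n → ℝ} (i : Fin n) :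
    meanFieldX n k m pin pout lam σ0 S i =
      meanFieldScore (n * (pin - pout) / 2) lam (k / (k + m)) (σ0 i) (S i) :=
  rfl

theorem meanFieldScore_row (hden : lam + α ≠ 0) {a b : ℝ} (hb : b = a ∨ b = -a ∨ b = 0) :
    α * meanFieldScore α lam s a b - α * (1 - 2 * s) * a
      + lam * ((if b = 0 then 0 else 1) * meanFieldScore α lam s a b) = lam * b := by
  unfold meanFieldScore
  split_ifs with hb0 hba
  · rw [hb0]; ring
  · rw [hba]; field_simp; ring
  · obtain rfl : b = -a := by tauto
    field_simp
    ring

variable {ι : Type*} [Fintype ι] {σ S : ι → ℝ} {k m : ℕ}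

theorem IsBalancedLabelling.sum_meanFieldScore (h : IsBalancedLabelling σ S k m) :
    ∑ j, meanFieldScore α lam s (σ j) (S j) = 0 := by
  rw [h.sum_eq]
  norm_num [meanFieldScore]

theorem IsBalancedLabelling.sum_mul_meanFieldScore (h : IsBalancedLabelling σ S k m)
    (hden : lam + α ≠ 0) :
    ∑ j, σ j * meanFieldScore α lam (k / (k + m)) (σ j) (S j) =
      Fintype.card ι * (1 - 2 * (k / (k + m))) := by
  have hs : ((k : ℝ) + m) * (k / (k + m)) = k :=
    mul_div_cancel_of_imp' fun hkm => by linarith [k.cast_nonneg (α := ℝ), m.cast_nonneg (α := ℝ)]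
  rw [h.sum_eq fun a b => a * meanFieldScore α lam (k / (k + m)) a b]
  norm_num [meanFieldScore]
  generalize (k : ℝ) / (k + m) = t at hs ⊢
  field_simp
  linear_combination 8 * lam * hs

end MeanFieldScore

section MeanFieldMatrix

variable {n : ℕ} {pin pout : ℝ} {σ0 : Fin n → ℝ}

theorem meanEA_apply_of_sign (hσ : ∀ i, σ0 i = 1 ∨ σ0 i = -1) (i j : Fin n) :
    meanEA n pin pout σ0 i j = (pin + pout) / 2 + (pin - pout) / 2 * (σ0 i * σ0 j) := by
  rcases hσ i with hi | hi <;> rcases hσ j with hj | hj <;> norm_num [meanEA, hi, hj] <;> ring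

theorem meanLtilde_mulVec_apply (hσ : ∀ i, σ0 i = 1 ∨ σ0 i = -1) (τ lam : ℝ) (S x : Fin n → ℝ)
    (i : Fin n) :
    (meanLtilde n pin pout τ lam σ0 S *ᵥ x) i =
      n * (pin - pout) / 2 * x i - ((pin + pout) / 2 - τ) * ∑ j, x j
        - (pin - pout) / 2 * σ0 i * ∑ j, σ0 j * x j
        + lam * ((if S i = 0 then 0 else 1) * x i) := by
  have hEA : (of (fun i j => meanEA n pin pout σ0 i j - τ) *ᵥ x) i =
      ((pin + pout) / 2 - τ) * ∑ j, x j + (pin - pout) / 2 * σ0 i * ∑ j, σ0 j * x j := by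
    simp only [mulVec, dotProduct, of_apply, meanEA_apply_of_sign hσ, mul_sum, ← sum_add_distrib]
    exact sum_congr rfl fun j _ => by ring
  simp only [meanLtilde, labelProj, add_mulVec, sub_mulVec, smul_mulVec, one_mulVec,
    mulVec_diagonal, Pi.add_apply, Pi.sub_apply, Pi.smul_apply, smul_eq_mul, hEA]
  ring

end MeanFieldMatrix

theorem meanField_linear_system_general
    (n : ℕ) (hev : Even n) (pin pout : ℝ)
    (hp : pout < pin)
    (k m : ℕ)
    (σ0 S : Fin n → ℝ)
    (hσ : ∀ i, σ0 i = 1 ∨ σ0 i = -1)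
    (hbal : (Finset.univ.filter (fun i => σ0 i = 1)).card = n / 2)
    (hSval : ∀ i, S i = σ0 i ∨ S i = -σ0 i ∨ S i = 0)
    (hk1 : (Finset.univ.filter (fun i => σ0 i = 1 ∧ S i = -1)).card = k)
    (hk2 : (Finset.univ.filter (fun i => σ0 i = -1 ∧ S i = 1)).card = k)
    (hm1 : (Finset.univ.filter (fun i => σ0 i = 1 ∧ S i = 1)).card = m)
    (hm2 : (Finset.univ.filter (fun i => σ0 i = -1 ∧ S i = -1)).card = m)
    (lam : ℝ) (hlam : 0 < lam) (τ : ℝ) :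
    meanLtilde n pin pout τ lam σ0 S *ᵥ meanFieldX n k m pin pout lam σ0 S
      = lam • S := by
  have hL : IsBalancedLabelling σ0 S k m :=
    ⟨hσ, hSval, by simpa using hev, by simpa using hbal, hk1, hk2, hm1, hm2⟩
  have hden : lam + n * (pin - pout) / 2 ≠ 0 := by
    have : 0 < pin - pout := sub_pos.2 hp
    positivity
  funext i
  rw [meanLtilde_mulVec_apply hσ, Pi.smul_apply, smul_eq_mul]
  simp only [meanFieldX_apply]
  rw [hL.sum_meanFieldScore, hL.sum_mul_meanFieldScore hden, Fintype.card_fin]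
  linear_combination meanFieldScore_row hden (hSval i)

/-- **Proposition 2 (mean-field solution).** In the mean-field setting, for `λ > 0`
and every real `τ`, the vector `X^MF` solves the linear system
`(α^MF·I − EA_τ + λ·P_L)·X^MF = λ·S`. -/
theorem meanField_linear_system
    (n : ℕ) (hn : 0 < n) (hev : Even n) (pin pout : ℝ)
    (hpout : 0 < pout) (hp : pout < pin) (hpin : pin < 1)
    (k m : ℕ) (hkm1 : 1 ≤ k + m) (hkm2 : k + m ≤ n / 2 - 1)
    (σ0 S : Fin n → ℝ)
    (hσ : ∀ i, σ0 i = 1 ∨ σ0 i = -1)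
    (hbal : (Finset.univ.filter (fun i => σ0 i = 1)).card = n / 2)
    (hSval : ∀ i, S i = σ0 i ∨ S i = -σ0 i ∨ S i = 0)
    (hk1 : (Finset.univ.filter (fun i => σ0 i = 1 ∧ S i = -1)).card = k)
    (hk2 : (Finset.univ.filter (fun i => σ0 i = -1 ∧ S i = 1)).card = k)
    (hm1 : (Finset.univ.filter (fun i => σ0 i = 1 ∧ S i = 1)).card = m)
    (hm2 : (Finset.univ.filter (fun i => σ0 i = -1 ∧ S i = -1)).card = m)
    (lam : ℝ) (hlam : 0 < lam) (τ : ℝ) :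
    meanLtilde n pin pout τ lam σ0 S *ᵥ meanFieldX n k m pin pout lam σ0 S
      = lam • S :=
  meanField_linear_system_general n hev pin pout hp k m σ0 S hσ hbal hSval hk1 hk2 hm1 hm2 lam hlam
    τ
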